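/- Let r₀ ≥ 0, ζ > 0, and let L : [0,∞) → (0,∞) be measurable, differentiable and nonincreasing on [r₀, ∞), with L(x) → 0 as x → ∞ and x·L(x) ≥ ζ·(−L′(x)) for all x ≥ r₀. Then for every λ > 1/(πζ), the double integral T₁ = ∫_0^∞ ∫_0^{r₀} 2πλ·r·t·exp( −πλr² − 2πλ·t·∫_{r₀}^∞ x·L(x)/(1+t·L(x)) dx ) dr dt satisfies T₁ ≤ (1 − e^{−πλ r₀²}) / ( L(r₀)² · (2πλζ − 1) · (2πλζ − 2) ); in particular T₁ is finite. -/

import Mathlib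

/-!
The regularity condition `x L(x) ≥ ζ (-L'(x))` bounds the interference exponent below by an
exactly computable integral,
`∫_{r₀}^∞ x L/(1 + tL) ≥ ζ ∫_{r₀}^∞ -L'/(1 + tL) = (ζ/t) log(1 + t L(r₀))`,
so `exp(-2πλ t ∫ …) ≤ (1 + L(r₀) t)^(-2πλζ)`. The bound then factors into the radial integral
`∫_0^{r₀} 2πλ r e^{-πλr²} dr = 1 - e^{-πλr₀²}` and the moment
`∫_0^∞ t (1 + c t)^(-a) dt = 1 / (c² (a - 1) (a - 2))`, finite because `a = 2πλζ > 2`.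
-/

open MeasureTheory

/-- The exponential `x ↦ e^{-x}` extended to `[0,∞]`, with `e^{-∞} = 0`. -/
noncomputable def expNeg (x : ENNReal) : ENNReal :=
  if x = ⊤ then 0 else ENNReal.ofReal (Real.exp (-x.toReal))

open Set Filter Topology Real ENNReal

lemma expNeg_ofReal {s : ℝ} (hs : 0 ≤ s) : expNeg (.ofReal s) = .ofReal (exp (-s)) := by
  rw [expNeg, if_neg ofReal_ne_top, toReal_ofReal hs]

lemma expNeg_add (a b : ℝ≥0∞) : expNeg (a + b) = expNeg a * expNeg b := by
  by_cases ha : a = ⊤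
  · simp [expNeg, ha]
  by_cases hb : b = ⊤
  · simp [expNeg, hb]
  rw [expNeg, expNeg, expNeg, if_neg ha, if_neg hb, if_neg (add_ne_top.mpr ⟨ha, hb⟩),
    toReal_add ha hb, neg_add, exp_add, ← ofReal_mul (exp_nonneg _)]

lemma expNeg_antitone : Antitone expNeg := by
  intro a b h
  by_cases hb : b = ⊤
  · simp [expNeg, hb]
  have ha : a ≠ ⊤ := ne_top_of_le_ne_top hb h
  rw [expNeg, expNeg, if_neg ha, if_neg hb]
  gcongr

lemma integral_Ioo_mul_exp_neg_mul_sq (A : ℝ) {r₀ : ℝ} (hr₀ : 0 ≤ r₀) :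
    ∫ r in Ioo 0 r₀, 2 * A * r * exp (-(A * r ^ 2)) = 1 - exp (-(A * r₀ ^ 2)) := by
  have hderiv (r : ℝ) :
      HasDerivAt (fun r ↦ -exp (-(A * r ^ 2))) (2 * A * r * exp (-(A * r ^ 2))) r := by
    refine (((hasDerivAt_pow 2 r).const_mul A).fun_neg.exp).fun_neg.congr_deriv ?_
    push_cast
    ring
  rw [← integral_Ioc_eq_integral_Ioo, ← intervalIntegral.integral_of_le hr₀,
    intervalIntegral.integral_eq_sub_of_hasDerivAt (fun r _ ↦ hderiv r)
      ((by fun_prop : Continuous _).intervalIntegrable _ _)]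
  simp only [ne_eq, OfNat.ofNat_ne_zero, not_false_eq_true, zero_pow, mul_zero, neg_zero, exp_zero]
  ring

lemma lintegral_Ioo_mul_expNeg_mul_sq_add {A r₀ : ℝ} (hA : 0 ≤ A) (hr₀ : 0 ≤ r₀)
    (t : ℝ) (E : ℝ≥0∞) :
    ∫⁻ r in Ioo 0 r₀, .ofReal (2 * A * r * t) * expNeg (.ofReal (A * r ^ 2) + E) =
      .ofReal (1 - exp (-(A * r₀ ^ 2))) * (.ofReal t * expNeg E) := by
  have hfactor : ∀ r ∈ Ioo 0 r₀,
      .ofReal (2 * A * r * t) * expNeg (.ofReal (A * r ^ 2) + E) =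
        .ofReal (2 * A * r * exp (-(A * r ^ 2))) * (.ofReal t * expNeg E) := by
    intro r hr
    have h2Ar : 0 ≤ 2 * A * r := by have := hr.1; positivity
    rw [expNeg_add, expNeg_ofReal (by positivity), ofReal_mul h2Ar, ofReal_mul h2Ar]
    ring
  rw [setLIntegral_congr_fun measurableSet_Ioo hfactor,
    lintegral_mul_const _ (by fun_prop), ← integral_Ioo_mul_exp_neg_mul_sq A hr₀,
    ofReal_integral_eq_lintegral_ofReal]
  · exact (by fun_prop : Continuous _).integrableOn_Ioc.mono_set Ioo_subset_Ioc_self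
  · refine (ae_restrict_iff' measurableSet_Ioo).mpr (.of_forall fun r hr ↦ ?_)
    have := hr.1
    positivity

section OneAddMulRpow

variable {c b : ℝ}

lemma hasDerivAt_one_add_mul_rpow_div (hc : c ≠ 0) (hb : b + 1 ≠ 0) {t : ℝ}
    (ht : 0 < 1 + c * t) :
    HasDerivAt (fun t ↦ (1 + c * t) ^ (b + 1) / (c * (b + 1))) ((1 + c * t) ^ b) t := by
  have hlin : HasDerivAt (fun t ↦ 1 + c * t) c t := by
    simpa using ((hasDerivAt_id t).const_mul c).const_add 1
  refine ((hlin.rpow_const (p := b + 1) (.inl ht.ne')).div_const _).congr_deriv ?_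
  field_simp
  ring_nf

lemma tendsto_one_add_mul_rpow_div_atTop (hc : 0 < c) (hb : b < -1) :
    Tendsto (fun t ↦ (1 + c * t) ^ (b + 1) / (c * (b + 1))) atTop (𝓝 0) := by
  have hlin : Tendsto (fun t ↦ 1 + c * t) atTop atTop :=
    tendsto_atTop_add_const_left _ 1 (tendsto_id.const_mul_atTop hc)
  have := (tendsto_rpow_neg_atTop (by linarith : 0 < -(b + 1))).comp hlin
  simpa [Function.comp_def] using this.div_const (c * (b + 1))

lemma integrableOn_Ioi_one_add_mul_rpow (hc : 0 < c) (hb : b < -1) :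
    IntegrableOn (fun t ↦ (1 + c * t) ^ b) (Ioi 0) :=
  integrableOn_Ioi_deriv_of_nonneg'
    (fun _ ht ↦ hasDerivAt_one_add_mul_rpow_div hc.ne' (by linarith)
      (by nlinarith [mem_Ici.mp ht]))
    (fun _ ht ↦ by have := mem_Ioi.mp ht; positivity) (tendsto_one_add_mul_rpow_div_atTop hc hb)

lemma integral_Ioi_one_add_mul_rpow (hc : 0 < c) (hb : b < -1) :
    ∫ t in Ioi 0, (1 + c * t) ^ b = -1 / (c * (b + 1)) := by
  rw [integral_Ioi_of_hasDerivAt_of_nonneg'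
    (fun _ ht ↦ hasDerivAt_one_add_mul_rpow_div hc.ne' (by linarith)
      (by nlinarith [mem_Ici.mp ht]))
    (fun _ ht ↦ by have := mem_Ioi.mp ht; positivity) (tendsto_one_add_mul_rpow_div_atTop hc hb)]
  simp [neg_div]

end OneAddMulRpow

lemma lintegral_Ioi_mul_one_add_mul_rpow_neg {c a : ℝ} (hc : 0 < c) (ha : 2 < a) :
    ∫⁻ t in Ioi 0, .ofReal (t * (1 + c * t) ^ (-a)) =
      .ofReal (1 / (c ^ 2 * (a - 1) * (a - 2))) := by
  have hsplit : ∀ t ∈ Ioi (0 : ℝ),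
      t * (1 + c * t) ^ (-a) = c⁻¹ * ((1 + c * t) ^ (-a + 1) - (1 + c * t) ^ (-a)) := by
    intro t ht
    have : 0 < 1 + c * t := by nlinarith [mem_Ioi.mp ht]
    rw [rpow_add_one this.ne']
    field_simp
    ring
  have h₁ := integrableOn_Ioi_one_add_mul_rpow hc (b := -a + 1) (by linarith)
  have h₀ := integrableOn_Ioi_one_add_mul_rpow hc (b := -a) (by linarith)
  rw [← ofReal_integral_eq_lintegral_ofReal, setIntegral_congr_fun measurableSet_Ioi hsplit,
    integral_const_mul, integral_sub h₁ h₀, integral_Ioi_one_add_mul_rpow hc (by linarith),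
    integral_Ioi_one_add_mul_rpow hc (by linarith)]
  · have : a - 1 ≠ 0 := by linarith
    have : a - 2 ≠ 0 := by linarith
    rw [show -a + 1 + 1 = -(a - 2) by ring, show -a + 1 = -(a - 1) by ring]
    congr 1
    field_simp
    ring
  · exact IntegrableOn.congr_fun ((h₁.sub h₀).const_mul c⁻¹) (fun t ht ↦ (hsplit t ht).symm)
      measurableSet_Ioi
  · refine (ae_restrict_iff' measurableSet_Ioi).mpr (.of_forall fun t ht ↦ ?_)
    have := mem_Ioi.mp ht
    positivity

section LogLowerBound

variable {L L' : ℝ → ℝ} {r₀ t : ℝ}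

lemma lintegral_Ioi_neg_deriv_div_one_add_mul (ht : 0 < t) (hL : ∀ x, r₀ ≤ x → 0 ≤ L x)
    (hderiv : ∀ x, r₀ ≤ x → HasDerivAt L (L' x) x) (hL' : ∀ x, r₀ ≤ x → L' x ≤ 0)
    (hlim : Tendsto L atTop (𝓝 0)) :
    ∫⁻ x in Ioi r₀, .ofReal (-L' x / (1 + t * L x)) =
      .ofReal (Real.log (1 + t * L r₀) / t) := by
  have hpos : ∀ x, r₀ ≤ x → 0 < 1 + t * L x := fun x hx ↦ by
    have := hL x hx
    positivity
  have hG : ∀ x ∈ Ici r₀,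
      HasDerivAt (fun x ↦ -Real.log (1 + t * L x) / t) (-L' x / (1 + t * L x)) x := by
    intro x hx
    refine ((((hderiv x hx).const_mul t).const_add 1).log (hpos x hx).ne').neg.div_const t
      |>.congr_deriv ?_
    field_simp
  have hnonneg : ∀ x ∈ Ioi r₀, 0 ≤ -L' x / (1 + t * L x) := fun x hx ↦
    div_nonneg (neg_nonneg.mpr (hL' x hx.le)) (hpos x hx.le).le
  have hGlim : Tendsto (fun x ↦ -Real.log (1 + t * L x) / t) atTop (𝓝 0) := by
    have := ((hlim.const_mul t).const_add 1).log (by norm_num) |>.neg.div_const t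
    simpa using this
  rw [← ofReal_integral_eq_lintegral_ofReal (integrableOn_Ioi_deriv_of_nonneg' hG hnonneg hGlim)
    ((ae_restrict_iff' measurableSet_Ioi).mpr (.of_forall hnonneg)),
    integral_Ioi_of_hasDerivAt_of_nonneg' hG hnonneg hGlim]
  simp [neg_div]

lemma ofReal_mul_log_div_le_lintegral {ζ : ℝ} (hζ : 0 ≤ ζ) (ht : 0 < t)
    (hL : ∀ x, r₀ ≤ x → 0 ≤ L x) (hderiv : ∀ x, r₀ ≤ x → HasDerivAt L (L' x) x)
    (hL' : ∀ x, r₀ ≤ x → L' x ≤ 0) (hlim : Tendsto L atTop (𝓝 0))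
    (hreg : ∀ x, r₀ ≤ x → ζ * (-(L' x)) ≤ x * L x) :
    .ofReal (ζ * (Real.log (1 + t * L r₀) / t)) ≤
      ∫⁻ x in Ioi r₀, .ofReal (x * L x / (1 + t * L x)) := by
  rw [ofReal_mul hζ, ← lintegral_Ioi_neg_deriv_div_one_add_mul ht hL hderiv hL' hlim,
    ← lintegral_const_mul' _ _ ofReal_ne_top]
  refine setLIntegral_mono' measurableSet_Ioi fun x hx ↦ ?_
  have hpos : 0 < 1 + t * L x := by
    have := hL x hx.le
    positivity
  rw [← ofReal_mul hζ, ← mul_div_assoc]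
  exact ofReal_le_ofReal (div_le_div_of_nonneg_right (hreg x hx.le) hpos.le)

end LogLowerBound

lemma expNeg_ofReal_mul_le_rpow_neg {B ζ t y : ℝ} {J : ℝ≥0∞} (hB : 0 ≤ B) (hζ : 0 ≤ ζ)
    (ht : 0 < t) (hy : 0 ≤ y) (hJ : .ofReal (ζ * (Real.log (1 + t * y) / t)) ≤ J) :
    expNeg (.ofReal (B * t) * J) ≤ .ofReal ((1 + y * t) ^ (-(B * ζ))) := by
  have hlog : 0 ≤ Real.log (1 + t * y) := log_nonneg (by nlinarith [mul_nonneg ht.le hy])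
  have hexponent : .ofReal (B * ζ * Real.log (1 + y * t)) ≤ .ofReal (B * t) * J := by
    calc .ofReal (B * ζ * Real.log (1 + y * t))
        = .ofReal (B * t) * .ofReal (ζ * (Real.log (1 + t * y) / t)) := by
          rw [← ofReal_mul (by positivity), mul_comm y t]
          field_simp
      _ ≤ .ofReal (B * t) * J := by gcongr
  refine (expNeg_antitone hexponent).trans_eq ?_
  rw [expNeg_ofReal (by rw [mul_comm y t]; positivity), rpow_def_of_pos (by positivity)]
  ring_nf

lemma HasDerivAt.nonpos_of_antitoneOn_Ici {f : ℝ → ℝ} {f' a x : ℝ} (hd : HasDerivAt f f' x)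
    (hf : AntitoneOn f (Ici a)) (hx : a ≤ x) : f' ≤ 0 := by
  have hacc : AccPt x (𝓟 (Ioi x)) := accPt_principal_iff_nhdsWithin.mpr <| by
    rw [sdiff_singleton_eq_self self_notMem_Ioi]
    infer_instance
  exact hd.hasDerivWithinAt.nonpos_of_antitoneOn
    (hacc.mono (principal_mono.mpr fun _ hy ↦ hx.trans (le_of_lt hy))) hf

theorem second_negative_moment_T1_bound_general
    (r₀ ζ lam : ℝ) (hr₀ : 0 ≤ r₀) (hζ : 0 < ζ) (L L' : ℝ → ℝ)
    (hLpos : ∀ x, 0 ≤ x → 0 < L x)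
    (hLderiv : ∀ x, r₀ ≤ x → HasDerivAt L (L' x) x)
    (hLmono : ∀ x y, r₀ ≤ x → x ≤ y → L y ≤ L x)
    (hLlim : Filter.Tendsto L Filter.atTop (nhds 0))
    (hreg : ∀ x, r₀ ≤ x → ζ * (-(L' x)) ≤ x * L x)
    (hlam : 1 / (Real.pi * ζ) < lam) :
    (∫⁻ t in Set.Ioi (0 : ℝ), ∫⁻ r in Set.Ioo (0 : ℝ) r₀,
        ENNReal.ofReal (2 * Real.pi * lam * r * t) *
          expNeg (ENNReal.ofReal (Real.pi * lam * r ^ 2) +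
            ENNReal.ofReal (2 * Real.pi * lam * t) *
              ∫⁻ x in Set.Ioi r₀, ENNReal.ofReal (x * L x / (1 + t * L x)))) ≤
      ENNReal.ofReal ((1 - Real.exp (-(Real.pi * lam * r₀ ^ 2))) /
        (L r₀ ^ 2 * (2 * Real.pi * lam * ζ - 1) * (2 * Real.pi * lam * ζ - 2))) ∧
    (∫⁻ t in Set.Ioi (0 : ℝ), ∫⁻ r in Set.Ioo (0 : ℝ) r₀,
        ENNReal.ofReal (2 * Real.pi * lam * r * t) *
          expNeg (ENNReal.ofReal (Real.pi * lam * r ^ 2) +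
            ENNReal.ofReal (2 * Real.pi * lam * t) *
              ∫⁻ x in Set.Ioi r₀, ENNReal.ofReal (x * L x / (1 + t * L x)))) < ⊤ := by
  have hπζ : 0 < π * ζ := mul_pos pi_pos hζ
  have hlam₀ : 0 < lam := (by positivity : 0 < 1 / (π * ζ)).trans hlam
  have ha : 2 < 2 * π * lam * ζ := by nlinarith [(div_lt_iff₀ hπζ).mp hlam]
  have hL : ∀ x, r₀ ≤ x → 0 ≤ L x := fun x hx ↦ (hLpos x (hr₀.trans hx)).le
  have hL' : ∀ x, r₀ ≤ x → L' x ≤ 0 := fun x hx ↦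
    (hLderiv x hx).nonpos_of_antitoneOn_Ici (fun x hx y _ hxy ↦ hLmono x y hx hxy) hx
  have hinner : ∀ t ∈ Ioi (0 : ℝ), ∫⁻ r in Ioo 0 r₀, .ofReal (2 * π * lam * r * t) *
      expNeg (.ofReal (π * lam * r ^ 2) +
        .ofReal (2 * π * lam * t) * ∫⁻ x in Ioi r₀, .ofReal (x * L x / (1 + t * L x))) ≤
      .ofReal (1 - exp (-(π * lam * r₀ ^ 2))) *
        .ofReal (t * (1 + L r₀ * t) ^ (-(2 * π * lam * ζ))) := by
    intro t ht
    simp_rw [show ∀ r, 2 * π * lam * r * t = 2 * (π * lam) * r * t from fun r ↦ by ring]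
    rw [lintegral_Ioo_mul_expNeg_mul_sq_add (by positivity) hr₀, ofReal_mul (le_of_lt ht)]
    gcongr
    exact expNeg_ofReal_mul_le_rpow_neg (by positivity) hζ.le ht (hL r₀ le_rfl)
      (ofReal_mul_log_div_le_lintegral hζ.le ht hL hLderiv hL' hLlim hreg)
  refine (fun h ↦ ⟨h, h.trans_lt ofReal_lt_top⟩) ?_
  calc _ ≤ ∫⁻ t in Ioi 0, .ofReal (1 - exp (-(π * lam * r₀ ^ 2))) *
          .ofReal (t * (1 + L r₀ * t) ^ (-(2 * π * lam * ζ))) :=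
        setLIntegral_mono' measurableSet_Ioi hinner
    _ = _ := by
      rw [lintegral_const_mul' _ _ ofReal_ne_top,
        lintegral_Ioi_mul_one_add_mul_rpow_neg (hLpos r₀ hr₀) ha, ← ofReal_mul, mul_one_div]
      exact sub_nonneg.mpr (exp_le_one_iff.mpr (neg_nonpos.mpr (by positivity)))

/-- Let `r₀ ≥ 0`, `ζ > 0`, and `L : [0,∞) → (0,∞)` measurable, differentiable
and nonincreasing on `[r₀,∞)`, with `L(x) → 0` as `x → ∞` and `x·L(x) ≥ ζ·(−L′(x))` for
`x ≥ r₀`. Then for every `λ > 1/(πζ)`, the double integral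
`T₁ = ∫_0^∞ ∫_0^{r₀} 2πλ·r·t·exp(−πλr² − 2πλ·t·∫_{r₀}^∞ x·L(x)/(1+t·L(x)) dx) dr dt`
satisfies `T₁ ≤ (1 − e^{−πλr₀²}) / (L(r₀)²·(2πλζ − 1)·(2πλζ − 2))`; in particular `T₁`
is finite. -/
theorem second_negative_moment_T1_bound
    (r₀ ζ lam : ℝ) (hr₀ : 0 ≤ r₀) (hζ : 0 < ζ) (L L' : ℝ → ℝ)
    (hLmeas : Measurable L)
    (hLpos : ∀ x, 0 ≤ x → 0 < L x)
    (hLderiv : ∀ x, r₀ ≤ x → HasDerivAt L (L' x) x)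
    (hLmono : ∀ x y, r₀ ≤ x → x ≤ y → L y ≤ L x)
    (hLlim : Filter.Tendsto L Filter.atTop (nhds 0))
    (hreg : ∀ x, r₀ ≤ x → ζ * (-(L' x)) ≤ x * L x)
    (hlam : 1 / (Real.pi * ζ) < lam) :
    (∫⁻ t in Set.Ioi (0 : ℝ), ∫⁻ r in Set.Ioo (0 : ℝ) r₀,
        ENNReal.ofReal (2 * Real.pi * lam * r * t) *
          expNeg (ENNReal.ofReal (Real.pi * lam * r ^ 2) +
            ENNReal.ofReal (2 * Real.pi * lam * t) *
              ∫⁻ x in Set.Ioi r₀, ENNReal.ofReal (x * L x / (1 + t * L x)))) ≤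
      ENNReal.ofReal ((1 - Real.exp (-(Real.pi * lam * r₀ ^ 2))) /
        (L r₀ ^ 2 * (2 * Real.pi * lam * ζ - 1) * (2 * Real.pi * lam * ζ - 2))) ∧
    (∫⁻ t in Set.Ioi (0 : ℝ), ∫⁻ r in Set.Ioo (0 : ℝ) r₀,
        ENNReal.ofReal (2 * Real.pi * lam * r * t) *
          expNeg (ENNReal.ofReal (Real.pi * lam * r ^ 2) +
            ENNReal.ofReal (2 * Real.pi * lam * t) *
              ∫⁻ x in Set.Ioi r₀, ENNReal.ofReal (x * L x / (1 + t * L x)))) < ⊤ :=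
  second_negative_moment_T1_bound_general r₀ ζ lam hr₀ hζ L L' hLpos hLderiv hLmono hLlim hreg hlam
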